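/- Let L/K be a cyclic Galois extension of degree m ≥ n with Galois group generated by θ, and g_1,…,g_n ∈ L linearly independent over K. The Gabidulin code C[n,k] = {(f(g_1),…,f(g_n)) : deg f < k} has minimum rank distance d = n − k + 1, where the rank weight of c ∈ L^n is dim_K span_K{c_1,…,c_n}; i.e., every nonzero codeword has rank weight at least n − k + 1. -/

import Mathlib

/-!
The codeword is the image of the basis `g` under the `K`-linear map `T x = ∑_{i<k} f_i θ^i(x)`,
so by rank–nullity it suffices that `T ≠ 0` kills no subspace of `span K g` of dimension `k`.
Induct on `k`: rescaling such a subspace `V` to contain `1` gives `∑ f_i = 0`, and then summation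
by parts factors `T = S ∘ (1 - θ)` with `S` of degree `< k - 1`. Since `θ` generates the Galois
group, the kernel of `1 - θ` is the line `K`, so `S` kills the `(k - 1)`-dimensional space
`(1 - θ) V`.
-/

open Finset Module

theorem Submodule.finrank_map_add_finrank_inf_ker {R V V₂ : Type*} [DivisionRing R]
    [AddCommGroup V] [Module R V] [AddCommGroup V₂] [Module R V₂] (W : Submodule R V)
    [FiniteDimensional R W] (φ : V →ₗ[R] V₂) :
    finrank R (W.map φ) + finrank R (W ⊓ LinearMap.ker φ : Submodule R V) = finrank R W := by
  rw [← LinearMap.range_domRestrict, ← (φ.domRestrict W).finrank_range_add_finrank_ker,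
    LinearMap.ker_domRestrict, ← Submodule.map_comap_subtype, Submodule.finrank_map_subtype_eq]

theorem eq_zero_of_forall_sum_range_succ_eq_zero {M : Type*} [AddCommGroup M] (f : ℕ → M)
    (n : ℕ) (h : ∀ i < n, ∑ j ∈ range (i + 1), f j = 0) : ∀ i < n, f i = 0 := by
  rintro (_ | i) hi
  · simpa using h 0 hi
  · simpa [sum_range_succ _ (i + 1), h i (by omega)] using h (i + 1) hi

section ThetaPolynomial

variable {K L : Type*} [Field K] [Field L] [Algebra K L]

noncomputable def thetaPolyMap (θ : L ≃ₐ[K] L) (k : ℕ) (f : ℕ → L) : L →ₗ[K] L :=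
  ∑ i ∈ range k, f i • (θ ^ i).toLinearMap

theorem thetaPolyMap_apply (θ : L ≃ₐ[K] L) (k : ℕ) (f : ℕ → L) (x : L) :
    thetaPolyMap θ k f x = ∑ i ∈ range k, f i * (θ ^ i) x := by
  simp [thetaPolyMap, LinearMap.sum_apply]

theorem thetaPolyMap_succ_eq_comp_one_sub (θ : L ≃ₐ[K] L) (k : ℕ) (f : ℕ → L)
    (hf : ∑ i ∈ range (k + 1), f i = 0) :
    thetaPolyMap θ (k + 1) f =
      thetaPolyMap θ k (fun i => ∑ j ∈ range (i + 1), f j) ∘ₗ (1 - θ.toLinearMap) := by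
  ext x
  have := sum_range_by_parts (fun i => (θ ^ i) x) f (k + 1)
  simp only [smul_eq_mul, add_tsub_cancel_right, hf, mul_zero, zero_sub] at this
  rw [LinearMap.comp_apply, thetaPolyMap_apply, thetaPolyMap_apply]
  simp_rw [mul_comm (f _), this, ← sum_neg_distrib]
  refine sum_congr rfl fun i _ => ?_
  rw [LinearMap.sub_apply, Module.End.one_apply, AlgEquiv.toLinearMap_apply, map_sub, pow_succ,
    AlgEquiv.mul_apply]
  ring

theorem thetaPolyMap_mul_left (θ : L ≃ₐ[K] L) (k : ℕ) (f : ℕ → L) (a x : L) :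
    thetaPolyMap θ k f (a * x) = thetaPolyMap θ k (fun i => f i * (θ ^ i) a) x := by
  simp only [thetaPolyMap_apply, map_mul, mul_assoc]

theorem thetaPolyMap_one (θ : L ≃ₐ[K] L) (k : ℕ) (f : ℕ → L) :
    thetaPolyMap θ k f 1 = ∑ i ∈ range k, f i := by
  simp [thetaPolyMap_apply]

theorem finrank_inf_ker_one_sub_le_one (θ : L ≃ₐ[K] L)
    (hfix : ∀ x, θ x = x → x ∈ Set.range (algebraMap K L)) (V : Submodule K L) :
    finrank K (V ⊓ LinearMap.ker (1 - θ.toLinearMap) : Submodule K L) ≤ 1 := by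
  have hle : V ⊓ LinearMap.ker (1 - θ.toLinearMap) ≤ K ∙ (1 : L) := by
    rintro x ⟨-, hx⟩
    obtain ⟨r, rfl⟩ := hfix x (sub_eq_zero.mp hx).symm
    exact Submodule.mem_span_singleton.mpr ⟨r, (Algebra.algebraMap_eq_smul_one r).symm⟩
  exact (Submodule.finrank_mono hle).trans (finrank_span_singleton one_ne_zero).le

theorem coeff_eq_zero_of_le_ker_thetaPolyMap (θ : L ≃ₐ[K] L)
    (hfix : ∀ x, θ x = x → x ∈ Set.range (algebraMap K L)) (k : ℕ) (f : ℕ → L)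
    (V : Submodule K L) (hV : k ≤ finrank K V)
    (hVker : V ≤ LinearMap.ker (thetaPolyMap θ k f)) :
    ∀ i < k, f i = 0 := by
  induction k generalizing f V with
  | zero => intro i hi; omega
  | succ k ih =>
    obtain ⟨a, haV, ha⟩ : ∃ a ∈ V, a ≠ 0 :=
      Submodule.exists_mem_ne_zero_of_ne_bot (by rintro rfl; simp at hV)
    set f' : ℕ → L := fun i => f i * (θ ^ i) a
    set V₁ := V.map (LinearMap.mulLeft K a⁻¹)
    have hV₁ : finrank K V₁ = finrank K V :=
      (Submodule.equivMapOfInjective _ (mul_right_injective₀ (inv_ne_zero ha)) V).finrank_eq.symm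
    have hV₁ker : V₁ ≤ LinearMap.ker (thetaPolyMap θ (k + 1) f') := by
      rintro _ ⟨y, hy, rfl⟩
      rw [LinearMap.mem_ker, LinearMap.mulLeft_apply, ← thetaPolyMap_mul_left,
        mul_inv_cancel_left₀ ha]
      exact hVker hy
    have hsum : ∑ i ∈ range (k + 1), f' i = 0 := by
      rw [← thetaPolyMap_one θ]
      exact hV₁ker ⟨a, haV, inv_mul_cancel₀ ha⟩
    set G : ℕ → L := fun i => ∑ j ∈ range (i + 1), f' j
    have hV₁fin : FiniteDimensional K V₁ := Module.finite_of_finrank_pos (by omega)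
    have hV₂ : k ≤ finrank K (V₁.map (1 - θ.toLinearMap)) := by
      have hrank := Submodule.finrank_map_add_finrank_inf_ker V₁ (1 - θ.toLinearMap)
      have hfixed := finrank_inf_ker_one_sub_le_one θ hfix V₁
      omega
    have hV₂ker : V₁.map (1 - θ.toLinearMap) ≤ LinearMap.ker (thetaPolyMap θ k G) := by
      rintro _ ⟨x, hx, rfl⟩
      have := hV₁ker hx
      rwa [LinearMap.mem_ker, thetaPolyMap_succ_eq_comp_one_sub θ k f' hsum] at this
    have hG : ∀ i < k + 1, G i = 0 := by
      intro i hi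
      rcases Nat.lt_succ_iff_lt_or_eq.mp hi with hi | rfl
      · exact ih G _ hV₂ hV₂ker i hi
      · exact hsum
    intro i hi
    have := eq_zero_of_forall_sum_range_succ_eq_zero f' (k + 1) hG i hi
    exact (mul_eq_zero.mp this).resolve_right ((map_ne_zero _).mpr ha)

theorem mem_range_algebraMap_of_apply_eq_self [IsGalois K L] {θ : L ≃ₐ[K] L}
    (hθ : ∀ σ : L ≃ₐ[K] L, σ ∈ Subgroup.zpowers θ) {x : L} (hx : θ x = x) :
    x ∈ Set.range (algebraMap K L) :=
  (InfiniteGalois.mem_range_algebraMap_iff_fixed x).mpr fun σ =>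
    (Subgroup.zpowers_le (H := MulAction.stabilizer (L ≃ₐ[K] L) x)).mpr hx (hθ σ)

end ThetaPolynomial

theorem gabidulin_minimum_rank_distance_general (K L : Type*) [Field K] [Field L]
    [Algebra K L] [IsGalois K L]
    (θ : L ≃ₐ[K] L) (hθ : ∀ σ : L ≃ₐ[K] L, σ ∈ Subgroup.zpowers θ)
    (n k : ℕ) (hkn : k ≤ n)
    (g : Fin n → L) (hg : LinearIndependent K g)
    (f : Fin k → L) (c : Fin n → L)
    (hc : ∀ j, c j = ∑ i : Fin k, f i * (θ ^ (i : ℕ)) (g j)) (hc0 : c ≠ 0) :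
    n - k + 1 ≤ Module.finrank K (Submodule.span K (Set.range c)) := by
  set F : ℕ → L := fun i => if h : i < k then f ⟨i, h⟩ else 0
  set T := thetaPolyMap θ k F
  have hcT : c = T ∘ g := by
    ext j
    rw [hc, Function.comp_apply, thetaPolyMap_apply, ← Fin.sum_univ_eq_sum_range]
    simp [F]
  have hWfin := FiniteDimensional.span_of_finite K (Set.finite_range g)
  set W := Submodule.span K (Set.range g) with hW
  have hker : finrank K (W ⊓ LinearMap.ker T : Submodule K L) < k := by
    by_contra! hk
    have hF := coeff_eq_zero_of_le_ker_thetaPolyMap θ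
      (fun _ => mem_range_algebraMap_of_apply_eq_self hθ) k F _ hk inf_le_right
    refine hc0 (funext fun j => ?_)
    rw [hc]
    refine sum_eq_zero fun i _ => ?_
    simpa [F] using congrArg (· * (θ ^ (i : ℕ)) (g j)) (hF i i.2)
  have hrank := Submodule.finrank_map_add_finrank_inf_ker W T
  rw [finrank_span_eq_card hg, Fintype.card_fin] at hrank
  rw [hcT, Set.range_comp, ← Submodule.map_span, ← hW]
  omega

/-- The Gabidulin code C[n,k] has minimum rank distance n − k + 1: every
nonzero codeword (f(g₁),…,f(gₙ)), deg f < k, has rank weight (the K-dimension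
of the K-span of its entries) at least n − k + 1. -/
theorem gabidulin_minimum_rank_distance (K L : Type*) [Field K] [Field L]
    [Algebra K L] [IsGalois K L] (m : ℕ) (hm : Module.finrank K L = m)
    (θ : L ≃ₐ[K] L) (hθ : ∀ σ : L ≃ₐ[K] L, σ ∈ Subgroup.zpowers θ)
    (n k : ℕ) (hkn : k ≤ n) (hnm : n ≤ m)
    (g : Fin n → L) (hg : LinearIndependent K g)
    (f : Fin k → L) (c : Fin n → L)
    (hc : ∀ j, c j = ∑ i : Fin k, f i * (θ ^ (i : ℕ)) (g j)) (hc0 : c ≠ 0) :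
    n - k + 1 ≤ Module.finrank K (Submodule.span K (Set.range c)) :=
  gabidulin_minimum_rank_distance_general K L θ hθ n k hkn g hg f c hc hc0
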